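/- arXiv:2005.00539 — 3 statements merged into one kernel-verified Lean document; each statement's English description precedes it below -/
import Mathlib

section
/- Every first-countable well-filtered T0 space is sober. -/
open Set Topology

universe u

variable {X : Type u}

/-- Specialization order: `x ≤ y` iff `x ∈ closure {y}`. -/
def specLE [TopologicalSpace X] (x y : X) : Prop := x ∈ closure ({y} : Set X)

/-- Directed subset w.r.t. the specialization order. -/
def dirOn [TopologicalSpace X] (D : Set X) : Prop :=
  D.Nonempty ∧ ∀ a ∈ D, ∀ b ∈ D, ∃ c ∈ D, specLE a c ∧ specLE b c

/-- Downward closure w.r.t. the specialization order. -/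
def dClo [TopologicalSpace X] (A : Set X) : Set X := {x | ∃ a ∈ A, specLE x a}

/-- Upward closure w.r.t. the specialization order. -/
def uClo [TopologicalSpace X] (A : Set X) : Set X := {x | ∃ a ∈ A, specLE a x}

/-- `x` is a supremum of `D` w.r.t. the specialization order. -/
def IsSupOf [TopologicalSpace X] (D : Set X) (x : X) : Prop :=
  (∀ d ∈ D, specLE d x) ∧ ∀ y, (∀ d ∈ D, specLE d y) → specLE x y

/-- A d-space: a T0 space in which every directed set (for the specialization order)
has a supremum, and every open set is inaccessible by directed suprema. -/
def IsDSpace (X : Type u) [TopologicalSpace X] : Prop :=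
  T0Space X ∧ (∀ D : Set X, dirOn D → ∃ x, IsSupOf D x) ∧
    ∀ D : Set X, dirOn D → ∀ x, IsSupOf D x →
      ∀ U : Set X, IsOpen U → x ∈ U → (D ∩ U).Nonempty

/-- A set is saturated if it is the intersection of the open sets containing it. -/
def IsSat [TopologicalSpace X] (A : Set X) : Prop :=
  A = ⋂₀ {U : Set X | IsOpen U ∧ A ⊆ U}

/-- The collection of nonempty compact saturated subsets. -/
def KSet (X : Type u) [TopologicalSpace X] : Set (Set X) :=
  {K | K.Nonempty ∧ IsCompact K ∧ IsSat K}

/-- A filtered family of sets: nonempty, and every two members contain a common member. -/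
def FiltFam [TopologicalSpace X] (𝒦 : Set (Set X)) : Prop :=
  𝒦.Nonempty ∧ ∀ K₁ ∈ 𝒦, ∀ K₂ ∈ 𝒦, ∃ K₃ ∈ 𝒦, K₃ ⊆ K₁ ∧ K₃ ⊆ K₂

/-- Well-filtered space. -/
def IsWF (X : Type u) [TopologicalSpace X] : Prop :=
  T0Space X ∧ ∀ 𝒦 : Set (Set X), 𝒦 ⊆ KSet X → FiltFam 𝒦 →
    ∀ U : Set X, IsOpen U → ⋂₀ 𝒦 ⊆ U → ∃ K ∈ 𝒦, K ⊆ U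

/-- Sober space: every irreducible closed subset is the closure of a unique point. -/
def IsSober (X : Type u) [TopologicalSpace X] : Prop :=
  ∀ A : Set X, IsIrreducible A → IsClosed A → ∃! x : X, A = closure {x}

/-- `V` is way below `U` in the lattice of open sets: every open cover of `U`
has a finite subfamily covering `V`. -/
def wayBelow [TopologicalSpace X] (V U : Set X) : Prop :=
  ∀ 𝒞 : Set (Set X), (∀ W ∈ 𝒞, IsOpen W) → U ⊆ ⋃₀ 𝒞 →
    ∃ 𝒟 ⊆ 𝒞, 𝒟.Finite ∧ V ⊆ ⋃₀ 𝒟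

/-- Core compact space. -/
def CoreCompact (X : Type u) [TopologicalSpace X] : Prop :=
  ∀ (x : X) (U : Set X), IsOpen U → x ∈ U →
    ∃ V : Set X, IsOpen V ∧ x ∈ V ∧ wayBelow V U

/-- The underlying type of the Smyth power space: nonempty compact saturated subsets. -/
abbrev KS (X : Type u) [TopologicalSpace X] : Type u :=
  {K : Set X // K.Nonempty ∧ IsCompact K ∧ IsSat K}

/-- The upper Vietoris topology on `KS X`, generated by the sets
`□U = {K | K ⊆ U}` for `U` open; this makes `KS X` the Smyth power space `P_S(X)`. -/
instance (X : Type u) [TopologicalSpace X] : TopologicalSpace (KS X) :=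
  TopologicalSpace.generateFrom
    {S | ∃ U : Set X, IsOpen U ∧ S = {K : KS X | (K : Set X) ⊆ U}}

/-- Rudin set: a nonempty closed set that is a minimal closed set meeting all
members of some filtered family of nonempty compact saturated sets. -/
def RudinSet [TopologicalSpace X] (A : Set X) : Prop :=
  IsClosed A ∧ A.Nonempty ∧ ∃ 𝒦 : Set (Set X), 𝒦 ⊆ KSet X ∧ FiltFam 𝒦 ∧
    (∀ K ∈ 𝒦, (K ∩ A).Nonempty) ∧
    ∀ B : Set X, IsClosed B → B ⊆ A → (∀ K ∈ 𝒦, (K ∩ B).Nonempty) → B = A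

/-- Well-filtered determined (WD) set. -/
def IsWDSet [TopologicalSpace X] (A : Set X) : Prop :=
  IsClosed A ∧ A.Nonempty ∧ ∀ (Y : Type u) [TopologicalSpace Y], IsWF Y →
    ∀ f : X → Y, Continuous f → ∃ y : Y, closure (f '' A) = closure {y}

/-- Rudin space: every irreducible closed set is a Rudin set. -/
def RudinSpace (X : Type u) [TopologicalSpace X] : Prop :=
  ∀ A : Set X, IsClosed A → IsIrreducible A → RudinSet A

/-- WD space: every irreducible closed set is a WD set. -/
def WDSpace (X : Type u) [TopologicalSpace X] : Prop :=
  ∀ A : Set X, IsClosed A → IsIrreducible A → IsWDSet A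

/-- DC space: every irreducible closed set is the closure of a directed set. -/
def DCSpace (X : Type u) [TopologicalSpace X] : Prop :=
  ∀ A : Set X, IsClosed A → IsIrreducible A → ∃ D : Set X, dirOn D ∧ A = closure D

/-!
Let `A` be closed and irreducible. In a well-filtered space the closure of a directed set `D`
is the closure of a point: the sets `↑d`, `d ∈ D`, form a filtered family of compact saturated
sets meeting `closure D`, so some point of `closure D` lies above all of `D`. It therefore
suffices to show that `A` is directed. Given `x, y ∈ A`, first countability and irreducibility
yield a sequence in `A` converging to `x`, to `y` and to each of its own terms. Its tails are
then compact, and well-filteredness applied to their saturations gives a point of `A` whose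
closure contains the whole sequence, hence `x` and `y`.
-/

open Filter

section

variable [TopologicalSpace X]

lemma specLE_iff_specializes {x y : X} : specLE x y ↔ y ⤳ x :=
  specializes_iff_mem_closure.symm

lemma specLE_trans {x y z : X} (hxy : specLE x y) (hyz : specLE y z) : specLE x z :=
  specLE_iff_specializes.2 <|
    (specLE_iff_specializes.1 hyz).trans (specLE_iff_specializes.1 hxy)

@[simp]
lemma mem_uClo_singleton {a x : X} : x ∈ uClo {a} ↔ specLE a x := by
  simp [uClo]

lemma subset_uClo (S : Set X) : S ⊆ uClo S :=
  fun s hs => ⟨s, hs, subset_closure rfl⟩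

lemma uClo_mono {S T : Set X} (h : S ⊆ T) : uClo S ⊆ uClo T := by
  rintro z ⟨s, hs, hz⟩
  exact ⟨s, h hs, hz⟩

lemma uClo_singleton_subset {a b : X} (h : specLE a b) : uClo {b} ⊆ uClo {a} := by
  intro x hx
  rw [mem_uClo_singleton] at hx ⊢
  exact specLE_trans h hx

lemma uClo_subset_of_isOpen {S U : Set X} (hU : IsOpen U) (hSU : S ⊆ U) : uClo S ⊆ U := by
  rintro z ⟨s, hs, hsz⟩
  exact (specLE_iff_specializes.1 hsz).mem_open hU (hSU hs)

lemma isSat_uClo (S : Set X) : IsSat (uClo S) := by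
  refine Subset.antisymm (fun z hz U hU => hU.2 hz) fun z hz => ?_
  by_contra hzS
  have hsub : uClo S ⊆ (closure {z})ᶜ := by
    rintro w ⟨s, hs, hsw⟩ hwz
    exact hzS ⟨s, hs, specLE_trans hsw hwz⟩
  exact hz _ ⟨isClosed_closure.isOpen_compl, hsub⟩ (subset_closure rfl)

lemma IsCompact.uClo {S : Set X} (h : IsCompact S) : IsCompact (uClo S) := by
  refine isCompact_of_finite_subcover fun U hU hcov => ?_
  obtain ⟨t, ht⟩ := h.elim_finite_subcover U hU ((subset_uClo S).trans hcov)
  exact ⟨t, uClo_subset_of_isOpen (isOpen_biUnion fun i _ => hU i) ht⟩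

lemma uClo_mem_KSet {S : Set X} (hne : S.Nonempty) (hS : IsCompact S) : uClo S ∈ KSet X :=
  ⟨hne.mono (subset_uClo S), hS.uClo, isSat_uClo S⟩

lemma IsWF.sInter_inter_nonempty (hwf : IsWF X) {𝒦 : Set (Set X)} (h𝒦 : 𝒦 ⊆ KSet X)
    (hfilt : FiltFam 𝒦) {A : Set X} (hA : IsClosed A) (hmeet : ∀ K ∈ 𝒦, (K ∩ A).Nonempty) :
    (⋂₀ 𝒦 ∩ A).Nonempty := by
  by_contra h
  obtain ⟨K, hK, hKA⟩ := hwf.2 𝒦 h𝒦 hfilt Aᶜ hA.isOpen_compl fun x hx hxA => h ⟨x, hx, hxA⟩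
  obtain ⟨x, hxK, hxA⟩ := hmeet K hK
  exact hKA hxK hxA

lemma IsWF.exists_closure_eq_of_dirOn (hwf : IsWF X) {D : Set X} (hD : dirOn D) :
    ∃ x, closure D = closure {x} := by
  have h𝒦 : (fun d => uClo {d}) '' D ⊆ KSet X := by
    rintro _ ⟨d, -, rfl⟩
    exact uClo_mem_KSet (singleton_nonempty d) isCompact_singleton
  have hfilt : FiltFam ((fun d => uClo {d}) '' D) := by
    refine ⟨hD.1.image _, ?_⟩
    rintro _ ⟨d₁, hd₁, rfl⟩ _ ⟨d₂, hd₂, rfl⟩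
    obtain ⟨d₃, hd₃, h₁₃, h₂₃⟩ := hD.2 d₁ hd₁ d₂ hd₂
    exact ⟨_, mem_image_of_mem _ hd₃, uClo_singleton_subset h₁₃, uClo_singleton_subset h₂₃⟩
  obtain ⟨x, hx𝒦, hxD⟩ := hwf.sInter_inter_nonempty h𝒦 hfilt isClosed_closure <| by
    rintro _ ⟨d, hd, rfl⟩
    exact ⟨d, subset_uClo _ rfl, subset_closure hd⟩
  have hDx : D ⊆ closure {x} := fun d hd =>
    mem_uClo_singleton.1 (hx𝒦 _ (mem_image_of_mem _ hd))
  exact ⟨x, (closure_minimal hDx isClosed_closure).antisymm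
    (closure_minimal (singleton_subset_iff.2 hxD) isClosed_closure)⟩

lemma IsWF.exists_closure_range_eq (hwf : IsWF X) {d : ℕ → X}
    (hd : ∀ i, Tendsto d atTop (𝓝 (d i))) : ∃ x, closure (range d) = closure {x} := by
  set tail : ℕ → Set X := fun n => range fun k => d (k + n)
  have htail_anti : Antitone tail := by
    rintro m n hmn _ ⟨k, rfl⟩
    exact ⟨k + (n - m), congrArg d (by omega)⟩
  have h𝒦 : range (fun n => uClo (tail n)) ⊆ KSet X := by
    rintro _ ⟨n, rfl⟩
    have hcpt : IsCompact (insert (d n) (tail n)) :=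
      ((tendsto_add_atTop_iff_nat n).2 (hd n)).isCompact_insert_range
    have hdn : d n ∈ tail n := ⟨0, by simp⟩
    rw [insert_eq_of_mem hdn] at hcpt
    exact uClo_mem_KSet (range_nonempty _) hcpt
  have hfilt : FiltFam (range fun n => uClo (tail n)) := by
    refine ⟨range_nonempty _, ?_⟩
    rintro _ ⟨m, rfl⟩ _ ⟨n, rfl⟩
    exact ⟨_, mem_range_self (max m n), uClo_mono (htail_anti (le_max_left m n)),
      uClo_mono (htail_anti (le_max_right m n))⟩
  obtain ⟨x, hx𝒦, hxd⟩ := hwf.sInter_inter_nonempty h𝒦 hfilt isClosed_closure <| by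
    rintro _ ⟨n, rfl⟩
    exact ⟨d n, subset_uClo _ ⟨0, by simp⟩, subset_closure (mem_range_self n)⟩
  -- `x` lies above terms of `d` arbitrarily far out, hence above every limit `d i`.
  have hdx : range d ⊆ closure {x} := by
    rintro _ ⟨i, rfl⟩
    refine isClosed_closure.mem_of_frequently_of_tendsto (frequently_atTop.2 fun n => ?_) (hd i)
    obtain ⟨_, ⟨k, rfl⟩, hkx⟩ := hx𝒦 _ (mem_range_self n)
    exact ⟨k + n, Nat.le_add_left n k, hkx⟩
  exact ⟨x, (closure_minimal hdx isClosed_closure).antisymm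
    (closure_minimal (singleton_subset_iff.2 hxd) isClosed_closure)⟩

lemma Filter.HasAntitoneBasis.tendsto_of_eventually_mem {α : Type*} {l : Filter α}
    {s : ℕ → Set α} (hl : l.HasAntitoneBasis s) {u : ℕ → α} {φ : ℕ → ℕ}
    (hφ : Tendsto φ atTop atTop) (hu : ∀ᶠ n in atTop, u n ∈ s (φ n)) : Tendsto u atTop l :=
  hl.tendsto_right_iff.2 fun i _ =>
    ((hφ.eventually_ge_atTop i).and hu).mono fun _ h => hl.antitone h.1 h.2

lemma IsIrreducible.inter_biInter_nhds_nonempty {A : Set X} (hA : IsIrreducible A)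
    {F : Finset X} (hFA : ↑F ⊆ A) {N : X → Set X} (hN : ∀ z ∈ F, N z ∈ 𝓝 z) :
    (A ∩ ⋂ z ∈ F, N z).Nonempty := by
  classical
  obtain ⟨x, hxA, hx⟩ := isIrreducible_iff_sInter.1 hA (F.image fun z => interior (N z))
    (by simp [isOpen_interior])
    (by simpa using fun z hz => ⟨z, hFA hz, mem_interior_iff_mem_nhds.2 (hN z hz)⟩)
  refine ⟨x, hxA, mem_iInter₂.2 fun z hz => interior_subset (hx _ ?_)⟩
  simpa using ⟨z, hz, rfl⟩

lemma IsIrreducible.exists_seq_tendsto_self [FirstCountableTopology X] {A : Set X}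
    (hA : IsIrreducible A) {F : Finset X} (hFA : ↑F ⊆ A) :
    ∃ d : ℕ → X, (∀ n, d n ∈ A) ∧ (∀ i, Tendsto d atTop (𝓝 (d i))) ∧
      ∀ z ∈ F, Tendsto d atTop (𝓝 z) := by
  classical
  choose b hb using fun x : X => (𝓝 x).exists_antitone_basis
  -- A point is recorded with the index `n` of the neighbourhoods `b · n` it was chosen in.
  obtain ⟨f, hfP, hfr⟩ := exists_seq_of_forall_finset_exists
    (fun p : ℕ × X => p.2 ∈ A ∧ ∀ z ∈ F, p.2 ∈ b z p.1)
    (fun p q => p.1 < q.1 ∧ q.2 ∈ b p.2 q.1) <| by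
      intro s hs
      set N := s.sup Prod.fst + 1
      have hsub : ↑(F ∪ s.image Prod.snd) ⊆ A := by
        simp only [Finset.coe_union, Finset.coe_image, union_subset_iff, image_subset_iff]
        exact ⟨hFA, fun p hp => (hs p hp).1⟩
      obtain ⟨y, hyA, hy⟩ :=
        hA.inter_biInter_nhds_nonempty hsub fun z _ => (hb z).mem N
      rw [mem_iInter₂] at hy
      refine ⟨(N, y), ⟨hyA, fun z hz => hy z (by simp [hz])⟩, fun p hp => ⟨?_, ?_⟩⟩
      · exact Nat.lt_succ_of_le (Finset.le_sup (f := Prod.fst) hp)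
      · exact hy p.2 (Finset.mem_union_right _ (Finset.mem_image_of_mem _ hp))
  have hmono : StrictMono fun n => (f n).1 :=
    strictMono_nat_of_lt_succ fun n => (hfr n (n + 1) n.lt_succ_self).1
  refine ⟨fun n => (f n).2, fun n => (hfP n).1, fun i => ?_, fun z hz => ?_⟩
  · exact (hb _).tendsto_of_eventually_mem hmono.tendsto_atTop
      ((eventually_gt_atTop i).mono fun n hn => (hfr i n hn).2)
  · exact (hb z).tendsto_of_eventually_mem hmono.tendsto_atTop
      (Eventually.of_forall fun n => (hfP n).2 z hz)

lemma IsWF.exists_upper_bound_of_isIrreducible [FirstCountableTopology X] (hwf : IsWF X)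
    {A : Set X} (hA : IsIrreducible A) (hAc : IsClosed A) {x y : X} (hx : x ∈ A) (hy : y ∈ A) :
    ∃ z ∈ A, specLE x z ∧ specLE y z := by
  classical
  obtain ⟨d, hdA, hdd, hdF⟩ :=
    hA.exists_seq_tendsto_self (F := {x, y}) (by simp [insert_subset_iff, hx, hy])
  obtain ⟨z, hz⟩ := hwf.exists_closure_range_eq hdd
  have hlim : ∀ w ∈ ({x, y} : Finset X), specLE w z := fun w hw => by
    rw [specLE, ← hz]
    exact mem_closure_of_tendsto (hdF w hw) (Eventually.of_forall mem_range_self)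
  have hzA : z ∈ A := by
    have hrA : closure (range d) ⊆ A := closure_minimal (range_subset_iff.2 hdA) hAc
    exact hrA (hz ▸ subset_closure rfl)
  exact ⟨z, hzA, hlim x (by simp), hlim y (by simp)⟩

end

/-- every first-countable well-filtered T0 space is sober. -/
theorem stmt3 {X : Type u} [TopologicalSpace X] [T0Space X]
    [FirstCountableTopology X] (hwf : IsWF X) : IsSober X := by
  intro A hA hAc
  have hdir : dirOn A :=
    ⟨hA.nonempty, fun x hx y hy => hwf.exists_upper_bound_of_isIrreducible hA hAc hx hy⟩
  obtain ⟨x, hx⟩ := hwf.exists_closure_eq_of_dirOn hdir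
  rw [hAc.closure_eq] at hx
  exact ⟨x, hx, fun y hy => (inseparable_iff_closure_eq.2 (hy.symm.trans hx)).eq⟩
end

section
/- For a T0 space X, the following conditions are equivalent: (1) X is well-filtered; (2) every Rudin set of X is the closure of a singleton; (3) every well-filtered determined (WD) set of X is the closure of a (unique) singleton. -/
open Set Topology

universe u

variable {X : Type u}

/-! A Rudin set `A` of a well-filtered space is a point closure: its filtered family `𝒦` cannot
have all its members inside the open set `Aᶜ`, so some `x ∈ A` lies in `⋂₀ 𝒦`, and then
minimality forces `A = closure {x}`. Continuous images of Rudin sets are Rudin (after closure),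
so Rudin sets are WD. Conversely, if `⋂₀ 𝒦 ⊆ U` but no member of `𝒦` lies in `U`, Zorn's lemma
yields a minimal closed set inside `Uᶜ` meeting every member of `𝒦`; it is a Rudin set, hence
`closure {x}`, and saturation of the members puts `x` in `⋂₀ 𝒦 ⊆ U`, a contradiction. -/

section RudinSets

variable {X Y : Type*} [TopologicalSpace X] [TopologicalSpace Y]

lemma isSat_iff_nhdsKer_eq {A : Set X} : IsSat A ↔ nhdsKer A = A := by
  rw [IsSat, nhdsKer_def, eq_comm]

lemma nhdsKer_mem_KSet {S : Set X} (hne : S.Nonempty) (hS : IsCompact S) :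
    nhdsKer S ∈ KSet X :=
  ⟨hne.mono subset_nhdsKer, IsCompact.nhdsKer_iff.2 hS,
    isSat_iff_nhdsKer_eq.2 (nhdsKer_nhdsKer S)⟩

lemma IsClosed.inter_nonempty_of_nhdsKer {B S : Set X} (hB : IsClosed B)
    (h : (nhdsKer S ∩ B).Nonempty) : (S ∩ B).Nonempty := by
  obtain ⟨x, hxS, hxB⟩ := h
  obtain ⟨s, hs, hxs⟩ := mem_nhdsKer_iff_specializes.1 hxS
  exact ⟨s, hs, hxs.mem_closed hB hxB⟩

lemma IsSat.mem_of_inter_closure_singleton_nonempty {K : Set X} (hK : IsSat K) {x : X}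
    (h : (K ∩ closure {x}).Nonempty) : x ∈ K := by
  obtain ⟨k, hkK, hkx⟩ := h
  rw [← isSat_iff_nhdsKer_eq.1 hK]
  exact mem_nhdsKer_iff_specializes.2 ⟨k, hkK, specializes_iff_mem_closure.2 hkx⟩

lemma FiltFam.image {𝒦 : Set (Set X)} {g : Set X → Set Y} (hg : Monotone g)
    (h𝒦 : FiltFam 𝒦) : FiltFam (g '' 𝒦) := by
  refine ⟨h𝒦.1.image g, ?_⟩
  rintro _ ⟨K₁, hK₁, rfl⟩ _ ⟨K₂, hK₂, rfl⟩
  obtain ⟨K₃, hK₃, h31, h32⟩ := h𝒦.2 K₁ hK₁ K₂ hK₂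
  exact ⟨g K₃, mem_image_of_mem g hK₃, hg h31, hg h32⟩

lemma IsCompact.inter_sInter_nonempty_of_isChain {K : Set X} (hK : IsCompact K)
    {c : Set (Set X)} (hc : IsChain (· ⊆ ·) c) (hcne : c.Nonempty)
    (hcl : ∀ C ∈ c, IsClosed C) (hmeet : ∀ C ∈ c, (K ∩ C).Nonempty) :
    (K ∩ ⋂₀ c).Nonempty := by
  have := hcne.to_subtype
  rw [nonempty_iff_ne_empty, sInter_eq_iInter]
  intro hempty
  have hdir : Directed (· ⊇ ·) (fun C : c => (C : Set X)) := fun C D =>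
    (hc.total C.2 D.2).elim (fun h => ⟨C, subset_rfl, h⟩) fun h => ⟨D, h, subset_rfl⟩
  obtain ⟨C, hC⟩ := hK.elim_directed_family_closed _ (fun C : c => hcl C C.2) hempty hdir
  exact (hmeet C C.2).ne_empty hC

lemma exists_minimal_isClosed_inter_nonempty {𝒦 : Set (Set X)} (h𝒦 : ∀ K ∈ 𝒦, IsCompact K)
    {C : Set X} (hC : IsClosed C) (hmeet : ∀ K ∈ 𝒦, (K ∩ C).Nonempty) :
    ∃ A ⊆ C, Minimal (fun B => IsClosed B ∧ ∀ K ∈ 𝒦, (K ∩ B).Nonempty) A := by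
  refine zorn_superset_nonempty _ (fun c hcS hc hcne => ?_) C ⟨hC, hmeet⟩
  refine ⟨⋂₀ c, ⟨isClosed_sInter fun B hB => (hcS hB).1, fun K hK => ?_⟩,
    fun B hB => sInter_subset_of_mem hB⟩
  exact (h𝒦 K hK).inter_sInter_nonempty_of_isChain hc hcne (fun B hB => (hcS hB).1)
    fun B hB => (hcS hB).2 K hK

lemma rudinSet_of_minimal {𝒦 : Set (Set X)} (h𝒦K : 𝒦 ⊆ KSet X) (h𝒦F : FiltFam 𝒦) {A : Set X}
    (hA : Minimal (fun B => IsClosed B ∧ ∀ K ∈ 𝒦, (K ∩ B).Nonempty) A) : RudinSet A := by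
  obtain ⟨K, hK⟩ := h𝒦F.1
  exact ⟨hA.prop.1, (hA.prop.2 K hK).mono inter_subset_right, 𝒦, h𝒦K, h𝒦F, hA.prop.2,
    fun B hBc hBA hBmeet => hA.eq_of_le ⟨hBc, hBmeet⟩ hBA⟩

lemma RudinSet.closure_image {A : Set X} (hA : RudinSet A) {f : X → Y} (hf : Continuous f) :
    RudinSet (closure (f '' A)) := by
  obtain ⟨hAc, hAne, 𝒦, h𝒦K, h𝒦F, h𝒦A, hmin⟩ := hA
  refine ⟨isClosed_closure, (hAne.image f).mono subset_closure,
    (fun K => nhdsKer (f '' (K ∩ A))) '' 𝒦, ?_, ?_, ?_, ?_⟩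
  · rintro _ ⟨K, hK, rfl⟩
    exact nhdsKer_mem_KSet ((h𝒦A K hK).image f) (((h𝒦K hK).2.1.inter_right hAc).image hf)
  · exact h𝒦F.image fun K L hKL => nhdsKer_mono (image_mono (inter_subset_inter_left A hKL))
  · rintro _ ⟨K, hK, rfl⟩
    obtain ⟨s, hsK, hsA⟩ := h𝒦A K hK
    exact ⟨f s, subset_nhdsKer (mem_image_of_mem f ⟨hsK, hsA⟩),
      subset_closure (mem_image_of_mem f hsA)⟩
  · intro B hBc hBA hBmeet
    have hpre : f ⁻¹' B ∩ A = A := by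
      refine hmin _ ((hBc.preimage hf).inter hAc) inter_subset_right fun K hK => ?_
      obtain ⟨_, ⟨k, ⟨hkK, hkA⟩, rfl⟩, hfkB⟩ :=
        hBc.inter_nonempty_of_nhdsKer (hBmeet _ (mem_image_of_mem _ hK))
      exact ⟨k, hkK, hfkB, hkA⟩
    refine hBA.antisymm (closure_minimal ?_ hBc)
    rw [image_subset_iff, ← hpre]
    exact inter_subset_left

lemma RudinSet.exists_eq_closure_singleton (hX : IsWF X) {A : Set X} (hA : RudinSet A) :
    ∃ x : X, A = closure {x} := by
  obtain ⟨hAc, -, 𝒦, h𝒦K, h𝒦F, h𝒦A, hmin⟩ := hA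
  have hnot : ¬ ⋂₀ 𝒦 ⊆ Aᶜ := by
    intro hsub
    obtain ⟨K, hK, hKA⟩ := hX.2 𝒦 h𝒦K h𝒦F Aᶜ hAc.isOpen_compl hsub
    obtain ⟨k, hkK, hkA⟩ := h𝒦A K hK
    exact hKA hkK hkA
  obtain ⟨x, hx𝒦, hxA⟩ := not_subset.1 hnot
  rw [notMem_compl_iff] at hxA
  exact ⟨x, (hmin _ isClosed_closure (hAc.closure_subset_iff.2 (singleton_subset_iff.2 hxA))
    fun K hK => ⟨x, hx𝒦 K hK, subset_closure rfl⟩).symm⟩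

lemma RudinSet.isWDSet {A : Set X} (hA : RudinSet A) : IsWDSet A :=
  ⟨hA.1, hA.2.1, fun _ _ hY _ hf => (hA.closure_image hf).exists_eq_closure_singleton hY⟩

lemma IsWDSet.existsUnique_eq_closure_singleton (hX : IsWF X) {A : Set X} (hA : IsWDSet A) :
    ∃! x : X, A = closure {x} := by
  have := hX.1
  obtain ⟨x, hx⟩ := hA.2.2 X hX id continuous_id
  rw [image_id, hA.1.closure_eq] at hx
  exact ⟨x, hx, fun y hy => (inseparable_iff_closure_eq.2 (hy.symm.trans hx)).eq⟩

lemma isWF_of_rudinSet_eq_closure_singleton [T0Space X]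
    (h : ∀ A : Set X, RudinSet A → ∃ x : X, A = closure {x}) : IsWF X := by
  refine ⟨‹_›, fun 𝒦 h𝒦K h𝒦F U hU h𝒦U => ?_⟩
  by_contra! hnot
  obtain ⟨A, hAU, hA⟩ := exists_minimal_isClosed_inter_nonempty (fun K hK => (h𝒦K hK).2.1)
    hU.isClosed_compl fun K hK => inter_compl_nonempty_iff.2 (hnot K hK)
  obtain ⟨x, rfl⟩ := h A (rudinSet_of_minimal h𝒦K h𝒦F hA)
  have hx𝒦 : x ∈ ⋂₀ 𝒦 := fun K hK =>
    (h𝒦K hK).2.2.mem_of_inter_closure_singleton_nonempty (hA.prop.2 K hK)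
  exact hAU (subset_closure rfl) (h𝒦U hx𝒦)

end RudinSets

/-- a T0 space is well-filtered iff every Rudin set is the closure of a
point iff every WD set is the closure of a unique point. -/
theorem stmt8 {X : Type u} [TopologicalSpace X] [T0Space X] :
    List.TFAE [IsWF X,
      ∀ A : Set X, RudinSet A → ∃ x : X, A = closure {x},
      ∀ A : Set X, IsWDSet A → ∃! x : X, A = closure {x}] := by
  tfae_have 1 → 3 := fun hX _ hA => hA.existsUnique_eq_closure_singleton hX
  tfae_have 3 → 2 := fun h A hA => (h A hA.isWDSet).exists
  tfae_have 2 → 1 := isWF_of_rudinSet_eq_closure_singleton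
  tfae_finish
end

section
/- Let X be a locally hypercompact T0 space and A an irreducible subset of X. Then there exists a subset D of ↓A that is directed in the specialization order and satisfies cl(A) = cl(D). -/
/-!
Call a finite set `F ⊆ ↓A` an approximant of `A` if some open set `W` meeting `A` satisfies
`W ∩ ↓A ⊆ ↑F`. Local hypercompactness puts an approximant inside every open set meeting `A`,
and together with irreducibility this makes the approximants filtered: any two `F`, `G` have an
approximant inside `↑F ∩ ↑G`. Rudin's lemma then yields a directed `D ⊆ ↓A` meeting every
approximant, hence every open set meeting `A`, so that `cl A ⊆ cl D ⊆ cl A`.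
-/

open Set Topology

universe u

variable {X : Type u}

def LocallyHyperCompact (X : Type u) [TopologicalSpace X] : Prop :=
  ∀ (x : X) (U : Set X), IsOpen U → x ∈ U →
    ∃ F : Finset X, F.Nonempty ∧ x ∈ interior (uClo ↑F) ∧ uClo ↑F ⊆ U

section Rudin

variable {α : Type*}

theorem IsChain.sInter_inter_nonempty_of_finite {c : Set (Set α)} (hc : IsChain (· ⊆ ·) c)
    (hne : c.Nonempty) {s : Set α} (hs : s.Finite) (h : ∀ t ∈ c, (t ∩ s).Nonempty) :
    (⋂₀ c ∩ s).Nonempty := by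
  obtain ⟨t₀, ht₀c, ht₀min⟩ := Finite.exists_minimalFor' (· ∩ s) c
    (hs.finite_subsets.subset <| image_subset_iff.2 fun _ _ => inter_subset_right) hne
  have hle : ∀ t ∈ c, t₀ ∩ s ⊆ t := by
    intro t htc
    rcases hc.total ht₀c htc with h | h
    · exact inter_subset_left.trans h
    · exact (ht₀min htc (inter_subset_inter_left s h)).trans inter_subset_left
  obtain ⟨x, hx⟩ := h t₀ ht₀c
  exact ⟨x, mem_sInter.2 fun t ht => hle t ht hx, hx.2⟩

/-- Rudin's lemma. The directed set is a minimal lower set meeting every member of `𝓕`. -/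
theorem exists_directedOn_subset_lowerClosure_of_filtered [Preorder α] {𝓕 : Set (Set α)}
    (hfin : ∀ F ∈ 𝓕, F.Finite) (hne : ∀ F ∈ 𝓕, F.Nonempty)
    (hfilt : ∀ F ∈ 𝓕, ∀ G ∈ 𝓕, ∃ H ∈ 𝓕, H ⊆ upperClosure F ∩ upperClosure G) :
    ∃ D : Set α, D ⊆ lowerClosure (⋃₀ 𝓕) ∧ DirectedOn (· ≤ ·) D ∧ ∀ F ∈ 𝓕, (D ∩ F).Nonempty := by
  set S := {M : Set α | IsLowerSet M ∧ ∀ F ∈ 𝓕, (M ∩ F).Nonempty}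
  have hbase : ↑(lowerClosure (⋃₀ 𝓕)) ∈ S :=
    ⟨(lowerClosure _).lower, fun F hF =>
      (hne F hF).mono fun x hx => ⟨subset_lowerClosure ⟨F, hF, hx⟩, hx⟩⟩
  have hchain : ∀ c ⊆ S, IsChain (· ⊆ ·) c → c.Nonempty → ∃ lb ∈ S, ∀ M ∈ c, lb ⊆ M :=
    fun c hcS hc hne => ⟨⋂₀ c, ⟨isLowerSet_sInter fun M hM => (hcS hM).1, fun F hF =>
      hc.sInter_inter_nonempty_of_finite hne (hfin F hF) fun M hM => (hcS hM).2 F hF⟩,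
      fun _ => sInter_subset_of_mem⟩
  obtain ⟨M, hMsub, hMmin⟩ := zorn_superset_nonempty S hchain _ hbase
  obtain ⟨hMlower, hMmeet⟩ := hMmin.prop
  have hM_subset : ∀ N, N ⊆ M → (∀ F ∈ 𝓕, ((lowerClosure N : Set α) ∩ F).Nonempty) →
      M ⊆ lowerClosure N := fun N hNM hN =>
    hMmin.le_of_le ⟨(lowerClosure N).lower, hN⟩ (lowerClosure_min hNM hMlower)
  have hM_upper : ∀ F ∈ 𝓕, M ⊆ lowerClosure (M ∩ upperClosure F) := by
    refine fun F hF => hM_subset _ inter_subset_left fun G hG => ?_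
    obtain ⟨H, hH, hHFG⟩ := hfilt F hF G hG
    obtain ⟨m, hmM, hmH⟩ := hMmeet H hH
    obtain ⟨g, hgG, hgm⟩ := mem_upperClosure.1 (hHFG hmH).2
    exact ⟨g, mem_lowerClosure.2 ⟨m, ⟨hmM, (hHFG hmH).1⟩, hgm⟩, hgG⟩
  refine ⟨M, hMsub, fun x hx y hy => ?_, hMmeet⟩
  have hy' : y ∈ lowerClosure (M ∩ Ici x) := by
    refine hM_subset _ inter_subset_left (fun F hF => ?_) hy
    obtain ⟨m, ⟨hmM, hmF⟩, hxm⟩ := mem_lowerClosure.1 (hM_upper F hF hx)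
    obtain ⟨f, hfF, hfm⟩ := mem_upperClosure.1 hmF
    exact ⟨f, mem_lowerClosure.2 ⟨m, ⟨hmM, hxm⟩, hfm⟩, hfF⟩
  obtain ⟨z, ⟨hzM, hxz⟩, hyz⟩ := mem_lowerClosure.1 hy'
  exact ⟨z, hzM, hxz, hyz⟩

end Rudin

section Specialization

attribute [local instance] specializationPreorder

variable [TopologicalSpace X]

theorem specLE_iff_le {x y : X} : specLE x y ↔ x ≤ y :=
  specializes_iff_mem_closure.symm

theorem dClo_eq_lowerClosure (A : Set X) : dClo A = lowerClosure A := by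
  ext x
  simp only [dClo, specLE_iff_le, mem_ofPred_eq, SetLike.mem_coe, mem_lowerClosure]

theorem uClo_eq_upperClosure (A : Set X) : uClo A = upperClosure A := by
  ext x
  simp only [uClo, specLE_iff_le, mem_ofPred_eq, SetLike.mem_coe, mem_upperClosure]

theorem dirOn_iff (D : Set X) : dirOn D ↔ D.Nonempty ∧ DirectedOn (· ≤ ·) D := by
  simp only [dirOn, DirectedOn, specLE_iff_le]

theorem lowerClosure_subset_closure (A : Set X) : ↑(lowerClosure A) ⊆ closure A :=
  lowerClosure_min subset_closure isClosed_closure.stableUnderSpecialization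

def finiteApprox (A : Set X) : Set (Set X) :=
  {F | F.Finite ∧ F ⊆ lowerClosure A ∧
    ∃ W, IsOpen W ∧ (A ∩ W).Nonempty ∧ W ∩ lowerClosure A ⊆ upperClosure F}

theorem finiteApprox_nonempty {A F : Set X} (hF : F ∈ finiteApprox A) : F.Nonempty := by
  obtain ⟨-, -, W, -, ⟨a, haA, haW⟩, hW⟩ := hF
  obtain ⟨f, hf, -⟩ := mem_upperClosure.1 (hW ⟨haW, subset_lowerClosure haA⟩)
  exact ⟨f, hf⟩

theorem LocallyHyperCompact.exists_finiteApprox_subset (hX : LocallyHyperCompact X)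
    {A U : Set X} (hU : IsOpen U) (hAU : (A ∩ U).Nonempty) : ∃ F ∈ finiteApprox A, F ⊆ U := by
  obtain ⟨a, haA, haU⟩ := hAU
  obtain ⟨F₀, -, haF₀, hF₀U⟩ := hX a U hU haU
  rw [uClo_eq_upperClosure] at haF₀ hF₀U
  refine ⟨F₀ ∩ lowerClosure A, ⟨F₀.finite_toSet.inter_of_left _, inter_subset_right,
    interior ↑(upperClosure (F₀ : Set X)), isOpen_interior, ⟨a, haA, haF₀⟩, ?_⟩,
    fun f hf => hF₀U (subset_upperClosure hf.1)⟩
  rintro z ⟨hz, hzA⟩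
  obtain ⟨f, hf, hfz⟩ := mem_upperClosure.1 (interior_subset hz)
  exact mem_upperClosure.2 ⟨f, ⟨hf, (lowerClosure A).lower hfz hzA⟩, hfz⟩

theorem LocallyHyperCompact.exists_finiteApprox_subset_upperClosure_inter
    (hX : LocallyHyperCompact X) {A F G : Set X} (hA : IsPreirreducible A)
    (hF : F ∈ finiteApprox A) (hG : G ∈ finiteApprox A) :
    ∃ H ∈ finiteApprox A, H ⊆ upperClosure F ∩ upperClosure G := by
  obtain ⟨-, -, WF, hWF, hAWF, hWFsub⟩ := hF
  obtain ⟨-, -, WG, hWG, hAWG, hWGsub⟩ := hG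
  obtain ⟨H, hH, hHW⟩ :=
    hX.exists_finiteApprox_subset (hWF.inter hWG) (hA WF WG hWF hWG hAWF hAWG)
  exact ⟨H, hH, fun h hh =>
    ⟨hWFsub ⟨(hHW hh).1, hH.2.1 hh⟩, hWGsub ⟨(hHW hh).2, hH.2.1 hh⟩⟩⟩

theorem LocallyHyperCompact.subset_closure_of_forall_finiteApprox (hX : LocallyHyperCompact X)
    {A D : Set X} (hD : ∀ F ∈ finiteApprox A, (D ∩ F).Nonempty) : A ⊆ closure D := by
  refine fun a ha => mem_closure_iff.2 fun U hU haU => ?_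
  obtain ⟨F, hF, hFU⟩ := hX.exists_finiteApprox_subset hU ⟨a, ha, haU⟩
  obtain ⟨d, hdD, hdF⟩ := hD F hF
  exact ⟨d, hFU hdF, hdD⟩

theorem stmt10_general {X : Type u} [TopologicalSpace X]
    (hX : LocallyHyperCompact X) (A : Set X) (hA : IsIrreducible A) :
    ∃ D ⊆ dClo A, dirOn D ∧ closure A = closure D := by
  obtain ⟨D, hD𝓕, hDdir, hDmeet⟩ := exists_directedOn_subset_lowerClosure_of_filtered
    (fun F hF => hF.1) (fun F hF => finiteApprox_nonempty hF)
    (fun F hF G hG => hX.exists_finiteApprox_subset_upperClosure_inter hA.isPreirreducible hF hG)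
  have hDA : D ⊆ lowerClosure A :=
    hD𝓕.trans (lowerClosure_min (sUnion_subset fun F hF => hF.2.1) (lowerClosure A).lower)
  obtain ⟨F, hF, -⟩ := hX.exists_finiteApprox_subset isOpen_univ (by simpa using hA.nonempty)
  refine ⟨D, (dClo_eq_lowerClosure A).symm ▸ hDA,
    (dirOn_iff D).2 ⟨(hDmeet F hF).mono inter_subset_left, hDdir⟩, ?_⟩
  apply Subset.antisymm
  · exact closure_minimal (hX.subset_closure_of_forall_finiteApprox hDmeet) isClosed_closure
  · exact closure_minimal (hDA.trans (lowerClosure_subset_closure A)) isClosed_closure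

/-- in a locally hypercompact T0 space, for every irreducible set `A`
there is a directed set `D ⊆ ↓A` with `cl A = cl D`. -/
theorem stmt10 {X : Type u} [TopologicalSpace X] [T0Space X]
    (hX : LocallyHyperCompact X) (A : Set X) (hA : IsIrreducible A) :
    ∃ D ⊆ dClo A, dirOn D ∧ closure A = closure D :=
  stmt10_general hX A hA

end Specialization
end
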